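/- Let A = diag(α₁,…,α_N) with α_j² distinct and nonzero, let γ be such that γ² ≠ α_j² and α_j² − γ² > 0 for all j, and let (p,q) ∈ ℝ^{2N}. Define L(λ;p,q) as the Lax matrix, D^(γ)(λ,b) = [[λ, γb],[γ b⁻¹, λ]], and the map (p̃_j, q̃_j)ᵀ = (α_j²−γ²)^{−1/2} D^(γ)(α_j,b) (p_j, q_j)ᵀ for some b ≠ 0. Then for all λ with λ² ∉ {α_j²}: L(λ;p̃,q̃)·D^(γ)(λ,b) − D^(γ)(λ,b)·L(λ;p,q) = −γ b⁻¹ P^(γ)(b;p,q)·σ₃, where P^(γ)(b;p,q) = b²L²¹(γ;p,q) + 2bL¹¹(γ;p,q) − L¹²(γ;p,q). -/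

import Mathlib

open Finset

/-- Quadratic form `Q_λ(ξ,η) = Σ_j ξ_j η_j / (λ² − α_j²)`. -/
noncomputable def Qlam {N : ℕ} (α : Fin N → ℝ) (lam : ℝ) (ξ η : Fin N → ℝ) : ℝ :=
  ∑ j, ξ j * η j / (lam ^ 2 - (α j) ^ 2)

/-- Lax matrix `L(λ;p,q)` of Eq. (2.1). -/
noncomputable def Lax {N : ℕ} (α : Fin N → ℝ) (lam : ℝ) (p q : Fin N → ℝ) :
    Matrix (Fin 2) (Fin 2) ℝ :=
  !![lam * Qlam α lam p q, 1 - Qlam α lam (fun j => α j * p j) p;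
     Qlam α lam (fun j => α j * q j) q, -(lam * Qlam α lam p q)]

/-- Darboux matrix `D^(γ)(λ,b)` (real version). -/
noncomputable def Dmat (γ lam b : ℝ) : Matrix (Fin 2) (Fin 2) ℝ := !![lam, γ * b; γ * b⁻¹, lam]

/-- The Pauli matrix σ₃. -/
def σ3 : Matrix (Fin 2) (Fin 2) ℝ := !![1, 0; 0, -1]

/-!
Away from its poles `L(λ) = E + Σ_j L_j(λ)` with `E = [[0,1],[0,0]]` and
`L_j(λ) = (λ² − α_j²)⁻¹ [[λ p_j q_j, −α_j p_j²], [α_j q_j², −λ p_j q_j]]`, and both sides of the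
identity are additive over this splitting: `P` is the linear form `b² M²¹ + 2b M¹¹ − M¹²`
(`darbouxForm b`) applied to `L(γ)`. So it suffices to check it for `E`, which is immediate, and
for each `L_j`, which only involves the `j`-th coordinates. There `(p̃_j, q̃_j) = s⁻¹ D(α_j)(p_j, q_j)`
with `s² = α_j² − γ²`, and as `L_j` is quadratic in `(p_j, q_j)` the square root enters only
through `s⁻² = (α_j² − γ²)⁻¹`, leaving a rational identity.
-/

noncomputable def laxTerm (a lam p q : ℝ) : Matrix (Fin 2) (Fin 2) ℝ :=
  (lam ^ 2 - a ^ 2)⁻¹ • !![lam * (p * q), -(a * p ^ 2); a * q ^ 2, -(lam * (p * q))]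

def laxConst : Matrix (Fin 2) (Fin 2) ℝ := !![0, 1; 0, 0]

noncomputable def darbouxForm (b : ℝ) : Matrix (Fin 2) (Fin 2) ℝ →ₗ[ℝ] ℝ where
  toFun M := b ^ 2 * M 1 0 + 2 * b * M 0 0 - M 0 1
  map_add' M M' := by simp only [Matrix.add_apply]; ring
  map_smul' c M := by simp only [Matrix.smul_apply, smul_eq_mul, RingHom.id_apply]; ring

lemma lax_eq_laxConst_add_sum_laxTerm {N : ℕ} (α : Fin N → ℝ) (lam : ℝ) (p q : Fin N → ℝ) :
    Lax α lam p q = laxConst + ∑ j, laxTerm (α j) lam (p j) (q j) := by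
  ext i k
  fin_cases i <;> fin_cases k <;>
    simp [Lax, laxConst, laxTerm, Qlam, Matrix.sum_apply, mul_sum, sub_eq_add_neg,
      ← sum_neg_distrib] <;>
    exact sum_congr rfl fun j _ => by ring

lemma laxTerm_mul_mul (a lam c p q : ℝ) :
    laxTerm a lam (c * p) (c * q) = c ^ 2 • laxTerm a lam p q := by
  ext i k
  fin_cases i <;> fin_cases k <;> simp [laxTerm] <;> ring

lemma laxConst_darboux (γ lam b : ℝ) :
    laxConst * Dmat γ lam b - Dmat γ lam b * laxConst
      = (-(γ * b⁻¹ * darbouxForm b laxConst)) • σ3 := by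
  ext i k
  fin_cases i <;> fin_cases k <;>
    simp [laxConst, Dmat, σ3, darbouxForm]

lemma laxTerm_darboux {a γ lam b s : ℝ} (p q : ℝ) (hlam : lam ^ 2 ≠ a ^ 2)
    (hs : s ^ 2 = a ^ 2 - γ ^ 2) (hs0 : s ≠ 0) (hb : b ≠ 0) :
    laxTerm a lam (s⁻¹ * (a * p + γ * b * q)) (s⁻¹ * (γ * b⁻¹ * p + a * q)) * Dmat γ lam b
        - Dmat γ lam b * laxTerm a lam p q
      = (-(γ * b⁻¹ * darbouxForm b (laxTerm a γ p q))) • σ3 := by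
  have hlam' : lam ^ 2 - a ^ 2 ≠ 0 := sub_ne_zero.mpr hlam
  have ha : a ^ 2 - γ ^ 2 ≠ 0 := hs ▸ pow_ne_zero 2 hs0
  have hγ : γ ^ 2 - a ^ 2 ≠ 0 := by rwa [← neg_sub, neg_ne_zero]
  rw [laxTerm_mul_mul, inv_pow, hs]
  ext i k
  fin_cases i <;> fin_cases k <;>
    · simp [laxTerm, Dmat, σ3, darbouxForm]
      field_simp
      ring

theorem lemma31_identity_general {N : ℕ} (α : Fin N → ℝ)
    (γ : ℝ) (hpos : ∀ j, (α j) ^ 2 - γ ^ 2 > 0)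
    (p q : Fin N → ℝ) (b : ℝ) (hb : b ≠ 0) :
    let pt : Fin N → ℝ := fun j => (Real.sqrt ((α j) ^ 2 - γ ^ 2))⁻¹ * (α j * p j + γ * b * q j)
    let qt : Fin N → ℝ := fun j => (Real.sqrt ((α j) ^ 2 - γ ^ 2))⁻¹ * (γ * b⁻¹ * p j + α j * q j)
    let P : ℝ := b ^ 2 * Lax α γ p q 1 0 + 2 * b * Lax α γ p q 0 0 - Lax α γ p q 0 1
    ∀ lam : ℝ, (∀ j, lam ^ 2 ≠ (α j) ^ 2) →
      Lax α lam pt qt * Dmat γ lam b - Dmat γ lam b * Lax α lam p q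
        = (-(γ * b⁻¹ * P)) • σ3 := by
  intro pt qt P lam hlam
  have hP : P = darbouxForm b (Lax α γ p q) := rfl
  have hterm (j : Fin N) := laxTerm_darboux (p j) (q j) (hlam j)
    (Real.sq_sqrt (hpos j).le) (Real.sqrt_ne_zero'.mpr (hpos j)) hb
  calc Lax α lam pt qt * Dmat γ lam b - Dmat γ lam b * Lax α lam p q
      = (laxConst * Dmat γ lam b - Dmat γ lam b * laxConst)
          + ∑ j, (laxTerm (α j) lam (pt j) (qt j) * Dmat γ lam b
            - Dmat γ lam b * laxTerm (α j) lam (p j) (q j)) := by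
        rw [lax_eq_laxConst_add_sum_laxTerm, lax_eq_laxConst_add_sum_laxTerm, add_mul, mul_add,
          sum_mul, mul_sum, sum_sub_distrib]
        abel
    _ = (-(γ * b⁻¹ * darbouxForm b laxConst)) • σ3
          + ∑ j, (-(γ * b⁻¹ * darbouxForm b (laxTerm (α j) γ (p j) (q j)))) • σ3 := by
        rw [laxConst_darboux]
        simp only [pt, qt, hterm]
    _ = (-(γ * b⁻¹ * P)) • σ3 := by
        rw [← sum_smul, ← add_smul, hP, lax_eq_laxConst_add_sum_laxTerm, map_add, map_sum,
          mul_add, mul_sum, neg_add, sum_neg_distrib]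

/-- Eq. (3.2) of Lemma 3.1: the key identity for the symplectic map `S_γ`. -/
theorem lemma31_identity {N : ℕ} (α : Fin N → ℝ) (hα : ∀ j, α j ≠ 0)
    (hαdist : ∀ j k, (α j) ^ 2 = (α k) ^ 2 → j = k)
    (γ : ℝ) (hγ : ∀ j, γ ^ 2 ≠ (α j) ^ 2) (hpos : ∀ j, (α j) ^ 2 - γ ^ 2 > 0)
    (p q : Fin N → ℝ) (b : ℝ) (hb : b ≠ 0) :
    let pt : Fin N → ℝ := fun j => (Real.sqrt ((α j) ^ 2 - γ ^ 2))⁻¹ * (α j * p j + γ * b * q j)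
    let qt : Fin N → ℝ := fun j => (Real.sqrt ((α j) ^ 2 - γ ^ 2))⁻¹ * (γ * b⁻¹ * p j + α j * q j)
    let P : ℝ := b ^ 2 * Lax α γ p q 1 0 + 2 * b * Lax α γ p q 0 0 - Lax α γ p q 0 1
    ∀ lam : ℝ, (∀ j, lam ^ 2 ≠ (α j) ^ 2) →
      Lax α lam pt qt * Dmat γ lam b - Dmat γ lam b * Lax α lam p q
        = (-(γ * b⁻¹ * P)) • σ3 :=
  lemma31_identity_general α γ hpos p q b hb
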